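/- arXiv:2202.06394 — 2 statements merged into one kernel-verified Lean document; each statement's English description precedes it below -/
import Mathlib

section
/- Consider the reflection I : Cat → Preord sending a small category to the preorder on its objects where x ≤ y iff there exists a morphism x → y, with unit η_C : C → HI(C). A functor f : A → B is a trivial covering (the naturality square of η at f, i.e., the square with sides f, η_A, η_B, I(f), is a pullback in Cat) if and only if for every pair of objects a, a' in A with Hom_A(a,a') nonempty, the induced map Hom_A(a,a') → Hom_B(f a, f a') is a bijection. -/
open CategoryTheory
universe u

/-- The objects of a small category, regarded as carrying the reflected preorder. -/
def PreOb (A : Cat.{u, u}) : Type u := A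

instance instPreObPreorder (A : Cat.{u, u}) : Preorder (PreOb A) where
  le x y := Nonempty ((show ↑A from x) ⟶ (show ↑A from y))
  le_refl x := ⟨𝟙 _⟩
  le_trans _ _ _ h h' := ⟨h.some ≫ h'.some⟩

/-- The reflection `I : Cat → Preord` on objects (regarded as landing in `Cat`). -/
def ICat (A : Cat.{u, u}) : Cat.{u, u} := Cat.of (PreOb A)

instance (A : Cat.{u, u}) : Preorder ↑(ICat A) := instPreObPreorder A

/-- In the reflected preorder, a morphism of `A` witnesses an inequality. -/
def toLe {A : Cat.{u, u}} {x y : ↑A} (g : x ⟶ y) :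
    (show PreOb A from x) ≤ (show PreOb A from y) := ⟨g⟩

/-- The unit of the reflection `Cat → Preord`. -/
def etaF (A : Cat.{u, u}) : A ⟶ ICat A where
  toFunctor.obj x := (show PreOb A from x)
  toFunctor.map {_x _y} g := homOfLE (toLe g)
  toFunctor.map_id _ := rfl
  toFunctor.map_comp _ _ := rfl

/-- The reflection `I : Cat → Preord` on morphisms. -/
def IFun {A B : Cat.{u, u}} (f : A ⟶ B) : ICat A ⟶ ICat B where
  toFunctor.obj x := (show PreOb B from f.toFunctor.obj (show ↑A from x))
  toFunctor.map {_x _y} g := homOfLE (Nonempty.map (fun h => f.toFunctor.map h) (leOfHom g))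
  toFunctor.map_id _ := rfl
  toFunctor.map_comp _ _ := rfl

/-- `f` is a trivial covering when its naturality square for the unit is a pullback in `Cat`. -/
def TrivialCov {A B : Cat.{u, u}} (f : A ⟶ B) : Prop :=
  IsPullback (etaF A) f (IFun f) (etaF B)

/-!
Maps out of the walking arrow are the arrows of a category, and an arrow of `ICat A` from `a` to
`a'` is just the fact that `Hom(a, a')` is nonempty. Tested against the walking arrow, the pullback
property therefore says that `g ↦ (a ≤ a', f g)` is a bijection from the arrows of `A` onto the
pairs of an inequality `a ≤ a'` and an arrow `f a ⟶ f a'`. Conversely, when `f` is bijective on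
nonempty hom-sets, a cone over the cospan is lifted to `A` by pulling its arrows in `B` back along
these bijections; the preorder leg of the cone guarantees that the hom-sets involved are nonempty.
-/

open Limits

namespace CategoryTheory

section

variable {C D X : Type*} [Category C] [Category D] [Category X]

lemma Functor.ext_of_isThin [Quiver.IsThin D] {F G : X ⥤ D} (h : ∀ x, F.obj x = G.obj x) :
    F = G :=
  Functor.ext h fun _ _ _ => Subsingleton.elim _ _

lemma Functor.ext_of_comp_eq {F : C ⥤ D} [F.Faithful] {L L' : X ⥤ C}
    (hobj : ∀ x, L.obj x = L'.obj x) (hcomp : L ⋙ F = L' ⋙ F) : L = L' :=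
  Functor.ext hobj fun _ _ φ => F.map_injective <| by
    simpa [eqToHom_map] using Functor.congr_hom hcomp φ

def Functor.BijectiveOnNonemptyHoms (F : C ⥤ D) : Prop :=
  ∀ a b : C, Nonempty (a ⟶ b) → Function.Bijective (F.map : (a ⟶ b) → (F.obj a ⟶ F.obj b))

namespace Functor.BijectiveOnNonemptyHoms

lemma faithful {F : C ⥤ D} (hF : F.BijectiveOnNonemptyHoms) : F.Faithful :=
  ⟨fun {a b} g _ h => (hF a b ⟨g⟩).1 h⟩

variable {F : C ⥤ D} (hF : F.BijectiveOnNonemptyHoms) (o : X → C) (G : X ⥤ D)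
  (hobj : ∀ x, F.obj (o x) = G.obj x) (hne : ∀ ⦃x y : X⦄, (x ⟶ y) → Nonempty (o x ⟶ o y))

noncomputable def lift : X ⥤ C where
  obj := o
  map φ := Function.surjInv (hF _ _ (hne φ)).2 (eqToHom (hobj _) ≫ G.map φ ≫ eqToHom (hobj _).symm)
  map_id _ := (hF _ _ ⟨𝟙 _⟩).1 (by simp [Function.surjInv_eq])
  map_comp φ ψ := (hF _ _ (hne (φ ≫ ψ))).1 (by simp [Function.surjInv_eq])

lemma lift_comp : lift hF o G hobj hne ⋙ F = G :=
  Functor.ext hobj fun _ _ _ => Function.surjInv_eq _ _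

end Functor.BijectiveOnNonemptyHoms

end

namespace Cat

def walkingArrow : Cat.{u, u} := Cat.of (AsSmall.{u} (Fin 2))

def ofArrow {C : Cat.{u, u}} {a b : C} (g : a ⟶ b) : walkingArrow.{u} ⟶ C :=
  (AsSmall.down ⋙ ComposableArrows.mk₁ g).toCatHom

variable {C : Cat.{u, u}}

lemma ofArrow_surjective (l : walkingArrow.{u} ⟶ C) : ∃ (a b : C) (g : a ⟶ b), l = ofArrow g := by
  obtain ⟨a, b, g, hg⟩ := ComposableArrows.mk₁_surjective (AsSmall.up ⋙ l.toFunctor)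
  exact ⟨a, b, g, Cat.Hom.ext (congrArg (AsSmall.down ⋙ ·) hg)⟩

lemma ofArrow_injective {a b : C} : Function.Injective (ofArrow : (a ⟶ b) → _) := fun _ _ h =>
  (Arrow.mk_inj _ _).1 <|
    congrArg (fun l : walkingArrow ⟶ C => ComposableArrows.arrowEquiv (AsSmall.up ⋙ l.toFunctor)) h

lemma eq_of_ofArrow_eq {a b a' b' : C} {g : a ⟶ b} {g' : a' ⟶ b'} (h : ofArrow g = ofArrow g') :
    a = a' ∧ b = b' :=
  ⟨congrArg (fun l => l.toFunctor.obj (AsSmall.up.obj 0)) h,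
    congrArg (fun l => l.toFunctor.obj (AsSmall.up.obj 1)) h⟩

lemma ofArrow_comp {D : Cat.{u, u}} {a b : C} (g : a ⟶ b) (F : C ⟶ D) :
    ofArrow g ≫ F = ofArrow (F.toFunctor.map g) :=
  -- both `eqToHom`s are taken along `rfl`, so they are identities
  Cat.Hom.ext <| congrArg (AsSmall.down ⋙ ·) <|
    ComposableArrows.ext₁ (F := ComposableArrows.mk₁ g ⋙ F.toFunctor)
      (G := ComposableArrows.mk₁ (F.toFunctor.map g)) rfl rfl
      ((Category.id_comp _).trans (Category.comp_id _)).symm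

end Cat

end CategoryTheory

instance instIsThinICat (A : Cat.{u, u}) : Quiver.IsThin (ICat A) :=
  fun _ _ => inferInstanceAs (Subsingleton (ULift (PLift _)))

section

variable {A B : Cat.{u, u}} {f : A ⟶ B}

lemma TrivialCov.faithful (hp : TrivialCov f) : f.toFunctor.Faithful where
  map_injective {_ _} g g' h := Cat.ofArrow_injective <| by
    refine hp.hom_ext ?_ ?_
    · rw [Cat.ofArrow_comp, Cat.ofArrow_comp]
      exact congrArg Cat.ofArrow (Subsingleton.elim _ _)
    · rw [Cat.ofArrow_comp, Cat.ofArrow_comp, h]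

lemma TrivialCov.map_surjective (hp : TrivialCov f) {a b : A} (h : a ⟶ b) :
    Function.Surjective (f.toFunctor.map : (a ⟶ b) → _) := by
  intro k
  have hcomm : Cat.ofArrow ((etaF A).toFunctor.map h) ≫ IFun f = Cat.ofArrow k ≫ etaF B := by
    rw [Cat.ofArrow_comp, Cat.ofArrow_comp]
    exact congrArg Cat.ofArrow (Subsingleton.elim _ _)
  have hfst := hp.lift_fst _ _ hcomm
  have hsnd := hp.lift_snd _ _ hcomm
  obtain ⟨x, y, g, hg⟩ := Cat.ofArrow_surjective (hp.lift _ _ hcomm)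
  rw [hg, Cat.ofArrow_comp] at hfst hsnd
  obtain ⟨rfl, rfl⟩ : x = a ∧ y = b := Cat.eq_of_ofArrow_eq (C := ICat A) hfst
  exact ⟨g, Cat.ofArrow_injective hsnd⟩

lemma TrivialCov.bijectiveOnNonemptyHoms (hp : TrivialCov f) :
    f.toFunctor.BijectiveOnNonemptyHoms := fun _ _ ⟨h⟩ =>
  ⟨hp.faithful.map_injective, hp.map_surjective h⟩

noncomputable def liftPullbackCone (hF : f.toFunctor.BijectiveOnNonemptyHoms)
    (s : PullbackCone (IFun f) (etaF B)) : s.pt ⟶ A :=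
  ⟨hF.lift (fun x => s.fst.toFunctor.obj x) s.snd.toFunctor
    (Functor.congr_obj (congrArg Cat.Hom.toFunctor s.condition))
    (fun _ _ φ => leOfHom (s.fst.toFunctor.map φ))⟩

lemma liftPullbackCone_comp (hF : f.toFunctor.BijectiveOnNonemptyHoms)
    (s : PullbackCone (IFun f) (etaF B)) : liftPullbackCone hF s ≫ f = s.snd :=
  Cat.Hom.ext (hF.lift_comp _ _ _ fun _ _ φ => leOfHom (s.fst.toFunctor.map φ))

lemma trivialCov_of_bijectiveOnNonemptyHoms (hF : f.toFunctor.BijectiveOnNonemptyHoms) :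
    TrivialCov f := by
  have := hF.faithful
  refine IsPullback.of_isLimit' ⟨Cat.Hom.ext (Functor.ext_of_isThin fun _ => rfl)⟩ <|
    PullbackCone.IsLimit.mk _ (liftPullbackCone hF)
      (fun _ => Cat.Hom.ext (Functor.ext_of_isThin fun _ => rfl)) (liftPullbackCone_comp hF) ?_
  intro s m h₁ h₂
  refine Cat.Hom.ext (Functor.ext_of_comp_eq (F := f.toFunctor) ?_ ?_)
  · exact fun x => Functor.congr_obj (congrArg Cat.Hom.toFunctor h₁) x
  · exact congrArg Cat.Hom.toFunctor (h₂.trans (liftPullbackCone_comp hF s).symm)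

end

/-- A functor `f : A ⟶ B` is a trivial covering for the reflection `Cat → Preord`
iff it induces bijections on all nonempty hom-sets. -/
theorem trivialCov_iff_bijective_on_nonempty_homs {A B : Cat.{u, u}} (f : A ⟶ B) :
    TrivialCov f ↔
      ∀ a a' : ↑A, Nonempty (a ⟶ a') →
        Function.Bijective (fun g : a ⟶ a' => f.toFunctor.map g) :=
  ⟨TrivialCov.bijectiveOnNonemptyHoms, trivialCov_of_bijectiveOnNonemptyHoms⟩
end

section
/- For the reflection I : Cat → Preord with unit η, and for any small category C and any functor μ : T → HI(C) from the preorder T with exactly two objects a, a' and a single non-identity relation a ≤ a', the pullback C_μ = C ×_{HI(C)} T (the 'connected component' of μ) satisfies I(C_μ) ≅ T. Consequently the reflection I : Cat → Preord is semi-left-exact (admissible): I preserves the pullback of η_C against any morphism from a preorder in the image of H. -/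
/-! Since `η_C` is the identity on objects, the pullback projection `C_μ → T` is injective
on objects. It is also split: `T` is the walking arrow, so `μ` lifts along `η_C` to `T → C` by
choosing a single morphism `μ a → μ a'` of `C`, and the pullback turns this lift into a section
`T → C_μ`. A functor that is bijective on objects, with an object inverse that is again a
functor, becomes an isomorphism under `I`; and `I T ≅ T` because `T` is already a preorder. -/

open CategoryTheory
universe u

/-- The preorder `T` with two objects `a ≤ a'` and a single non-identity arrow,
regarded as a category. -/
noncomputable def TCat : Cat.{u, u} := Cat.of (ULift.{u} Bool)

instance (A : Cat.{u, u}) : Quiver.IsThin (ICat A) :=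
  fun _ _ => ⟨fun f g => Subsingleton.elim (α := ULift (PLift _)) f g⟩

lemma CategoryTheory.Cat.hom_ext_of_isThin {A B : Cat} [Quiver.IsThin B] {F G : A ⟶ B}
    (h : ∀ a, F.toFunctor.obj a = G.toFunctor.obj a) : F = G :=
  Cat.ext (Functor.ext h fun _ _ _ => Subsingleton.elim _ _)

lemma etaF_obj_injective (A : Cat.{u, u}) : Function.Injective (etaF A).toFunctor.obj :=
  fun _ _ h => h

lemma CategoryTheory.IsPullback.snd_obj_injective {P X Y Z : Cat.{u, u}} {fst : P ⟶ X}
    {snd : P ⟶ Y} {f : X ⟶ Z} {g : Y ⟶ Z} (h : IsPullback fst snd f g)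
    (hf : Function.Injective f.toFunctor.obj) : Function.Injective snd.toFunctor.obj := by
  intro p q hpq
  let pt (x : P) : Cat.of (Discrete PUnit.{u + 1}) ⟶ P := (Functor.fromPUnit x).toCatHom
  have hw (x : P) :
      f.toFunctor.obj (fst.toFunctor.obj x) = g.toFunctor.obj (snd.toFunctor.obj x) :=
    Functor.congr_obj (congrArg Cat.Hom.toFunctor h.w) x
  have hfst : fst.toFunctor.obj p = fst.toFunctor.obj q := hf (by rw [hw, hw, hpq])
  have : pt p = pt q := h.hom_ext (Cat.ext (Discrete.functor_ext fun _ => hfst))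
    (Cat.ext (Discrete.functor_ext fun _ => hpq))
  exact Functor.congr_obj (congrArg Cat.Hom.toFunctor this) ⟨⟨⟩⟩

def ICat.isoOfObjInverse {A B : Cat.{u, u}} (F : A ⟶ B) (G : B ⟶ A)
    (hGF : ∀ a, G.toFunctor.obj (F.toFunctor.obj a) = a)
    (hFG : ∀ b, F.toFunctor.obj (G.toFunctor.obj b) = b) : ICat A ≅ ICat B where
  hom := IFun F
  inv := IFun G
  hom_inv_id := Cat.hom_ext_of_isThin hGF
  inv_hom_id := Cat.hom_ext_of_isThin hFG

instance (α : Type u) [Preorder α] : Quiver.IsThin (Cat.of α) :=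
  inferInstanceAs (Quiver.IsThin α)

noncomputable def ICat.isoOfPreorder (α : Type u) [Preorder α] :
    ICat (Cat.of α) ≅ Cat.of α where
  hom.toFunctor :=
    { obj x := (show α from x)
      map g := (leOfHom g).some }
  inv.toFunctor :=
    { obj x := (show PreOb (Cat.of α) from x)
      map g := homOfLE ⟨g⟩ }
  hom_inv_id := Cat.hom_ext_of_isThin fun _ => rfl
  inv_hom_id := Cat.hom_ext_of_isThin fun _ => rfl

lemma TCat.down_le_of_hom {s t : TCat.{u}} (g : s ⟶ t) :
    (s : ULift Bool).down ≤ (t : ULift Bool).down :=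
  @leOfHom (ULift.{u} Bool) _ s t g

def TCat.functorOfHom {C : Cat.{u, u}} {x y : C} (f : x ⟶ y) : TCat.{u} ⟶ C where
  toFunctor.obj t := bif (t : ULift Bool).down then y else x
  toFunctor.map {s t} g := match s, t, g with
    | ⟨false⟩, ⟨false⟩, _ => 𝟙 x
    | ⟨false⟩, ⟨true⟩, _ => f
    | ⟨true⟩, ⟨true⟩, _ => 𝟙 y
    | ⟨true⟩, ⟨false⟩, g => absurd (TCat.down_le_of_hom g) (by decide)
  toFunctor.map_id := by rintro ⟨_ | _⟩ <;> rfl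
  toFunctor.map_comp := by
    rintro ⟨_ | _⟩ ⟨_ | _⟩ ⟨_ | _⟩ g g' <;> first
      | exact absurd (TCat.down_le_of_hom g) (by decide)
      | exact absurd (TCat.down_le_of_hom g') (by decide)
      | simp

lemma TCat.exists_lift_etaF {C : Cat.{u, u}} (μ : TCat.{u} ⟶ ICat C) :
    ∃ L : TCat.{u} ⟶ C, L ≫ etaF C = μ := by
  let a_le_a' : (⟨false⟩ : ULift.{u} Bool) ⟶ ⟨true⟩ := homOfLE (by decide)
  let f := (leOfHom (μ.toFunctor.map a_le_a')).some
  exact ⟨TCat.functorOfHom f, Cat.hom_ext_of_isThin fun ⟨b⟩ => by cases b <;> rfl⟩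

/-- The connected component `C_μ` of any `μ : T ⟶ HI(C)` is reflected onto `T`:
`I (C_μ) ≅ T`.  This is semi-left-exactness (admissibility) of `Cat → Preord`. -/
theorem ICat_connected_component_iso_T (C : Cat.{u, u}) (μ : TCat ⟶ ICat C)
    (P : Cat.{u, u}) (π₁ : P ⟶ C) (π₂ : P ⟶ TCat)
    (hpb : IsPullback π₁ π₂ (etaF C) μ) :
    Nonempty (ICat P ≅ TCat) := by
  obtain ⟨L, hL⟩ := TCat.exists_lift_etaF μ
  let ℓ : TCat ⟶ P := hpb.lift L (𝟙 _) (by rw [hL, Category.id_comp])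
  have hsect (t : TCat) : π₂.toFunctor.obj (ℓ.toFunctor.obj t) = t :=
    Functor.congr_obj (congrArg Cat.Hom.toFunctor (hpb.lift_snd _ _ _)) t
  have hinj := hpb.snd_obj_injective (etaF_obj_injective C)
  exact ⟨ICat.isoOfObjInverse π₂ ℓ (fun p => hinj (hsect _)) hsect ≪≫
    ICat.isoOfPreorder (ULift Bool)⟩
end
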